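/- arXiv:1810.09013 — 6 statements merged into one kernel-verified Lean document; each statement's English description precedes it below -/
import Mathlib

section
/- Let f : ℝ^d → ℝ have compact support, and let v₀ : ℝ → ℝ be such that u·v₀ ∈ L^1(ℝ) ∩ L^2(ℝ), where u(x) = x. Define v₁(x) = ∫_{supp f} |f(s)|^{-1} v₀(x / f(s)) ds. Then u·v₁ ∈ L^1(ℝ) ∩ L^2(ℝ), with ‖u v₁‖_{L^k(ℝ)} ≤ ‖u v₀‖_{L^k(ℝ)} · ∫_{supp f} |f(s)|^{1/k} ds for k = 1, 2. -/
/-!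
Put `h(y) = y v₀(y)`. For `s ∈ supp f`, the integrand `x |f s|⁻¹ v₀(x / f s)` of `u v₁` has the
same absolute value as `h(x / f s)`, whose `L^k` norm is `|f s|^{1/k} ‖h‖_k` by the change of
variables `x = f(s) y`. Minkowski's integral inequality bounds `‖u v₁‖_k` by the integral over
`supp f` of these norms. For `k = 1` it is Tonelli; for `k = 2` expand the square, integrate in
`x` first and apply Cauchy–Schwarz to each cross term.
-/

open MeasureTheory Function

open scoped ENNReal

theorem eLpNorm_comp_div_const {E : Type*} [NormedAddCommGroup E] (h : ℝ → E) {c : ℝ}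
    (hc : c ≠ 0) (p : ℝ≥0∞) :
    eLpNorm (fun x => h (x / c)) p volume =
      ENNReal.ofReal |c| ^ (1 / p).toReal * eLpNorm h p volume := by
  have hc' : c⁻¹ ≠ 0 := inv_ne_zero hc
  have hcomp : (fun x => h (x / c)) = h ∘ (c⁻¹ * ·) := by
    funext x; simp [div_eq_inv_mul]
  rw [hcomp, ← (measurableEmbedding_mulLeft₀ hc').eLpNorm_map_measure,
    Real.map_volume_mul_left hc', inv_inv,
    eLpNorm_smul_measure_of_ne_zero (by simpa using hc), smul_eq_mul]

section Minkowski

variable {α β : Type*} [MeasurableSpace α] [MeasurableSpace β] {ν : Measure α} {μ : Measure β}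

theorem eLpNorm_two_eq_lintegral_sq (F : β → ℝ≥0∞) :
    eLpNorm F 2 μ = (∫⁻ x, F x ^ (2 : ℝ) ∂μ) ^ (1 / 2 : ℝ) := by
  simp [eLpNorm_eq_lintegral_rpow_enorm_toReal two_ne_zero ENNReal.ofNat_ne_top]

theorem lintegral_sq_eq_lintegral_lintegral_mul {F : α → ℝ≥0∞} (hF : Measurable F) :
    (∫⁻ s, F s ∂ν) ^ 2 = ∫⁻ s, ∫⁻ t, F s * F t ∂ν ∂ν := by
  rw [sq, ← lintegral_mul_const _ hF]
  exact lintegral_congr fun s => (lintegral_const_mul _ hF).symm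

variable [SFinite ν] [SFinite μ]

theorem eLpNorm_one_lintegral {G : α → β → ℝ≥0∞} (hG : Measurable (uncurry G)) :
    eLpNorm (fun x => ∫⁻ s, G s x ∂ν) 1 μ = ∫⁻ s, eLpNorm (G s) 1 μ ∂ν := by
  simp only [eLpNorm_one_eq_lintegral_enorm, enorm_eq_self]
  exact lintegral_lintegral_swap (hG.comp measurable_swap).aemeasurable

theorem eLpNorm_two_lintegral_le {G : α → β → ℝ≥0∞} (hG : Measurable (uncurry G)) :
    eLpNorm (fun x => ∫⁻ s, G s x ∂ν) 2 μ ≤ ∫⁻ s, eLpNorm (G s) 2 μ ∂ν := by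
  have hGs (s : α) : Measurable (G s) := hG.comp measurable_prodMk_left
  have hGx (x : β) : Measurable fun s => G s x := hG.comp (measurable_id.prodMk measurable_const)
  have hA : Measurable fun s => eLpNorm (G s) 2 μ := by
    simp only [eLpNorm_two_eq_lintegral_sq]
    exact ((hG.pow_const _).lintegral_prod_right').pow_const _
  have hprod : Measurable fun p : (β × α) × α => G p.1.2 p.1.1 * G p.2 p.1.1 :=
    (hG.comp (measurable_fst.snd.prodMk measurable_fst.fst)).mul
      (hG.comp (measurable_snd.prodMk measurable_fst.fst))
  rw [← ENNReal.rpow_le_rpow_iff two_pos, eLpNorm_two_eq_lintegral_sq, ← ENNReal.rpow_mul,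
    one_div_mul_cancel two_ne_zero, ENNReal.rpow_one]
  simp only [ENNReal.rpow_two]
  calc ∫⁻ x, (∫⁻ s, G s x ∂ν) ^ 2 ∂μ
      = ∫⁻ x, ∫⁻ s, ∫⁻ t, G s x * G t x ∂ν ∂ν ∂μ :=
        lintegral_congr fun x => lintegral_sq_eq_lintegral_lintegral_mul (hGx x)
    _ = ∫⁻ s, ∫⁻ t, ∫⁻ x, G s x * G t x ∂μ ∂ν ∂ν := by
      rw [lintegral_lintegral_swap hprod.lintegral_prod_right'.aemeasurable]
      refine lintegral_congr fun s => lintegral_lintegral_swap ?_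
      exact (hprod.comp ((measurable_fst.prodMk measurable_const).prodMk
        measurable_snd)).aemeasurable
    _ ≤ ∫⁻ s, ∫⁻ t, eLpNorm (G s) 2 μ * eLpNorm (G t) 2 μ ∂ν ∂ν := by
      gcongr with s t
      simpa [eLpNorm_two_eq_lintegral_sq] using ENNReal.lintegral_mul_le_Lp_mul_Lq μ
        Real.HolderConjugate.two_two (hGs s).aemeasurable (hGs t).aemeasurable
    _ = (∫⁻ s, eLpNorm (G s) 2 μ ∂ν) ^ 2 := (lintegral_sq_eq_lintegral_lintegral_mul hA).symm

theorem eLpNorm_lintegral_le {G : α → β → ℝ≥0∞} (hG : Measurable (uncurry G)) {p : ℝ≥0∞}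
    (hp : p = 1 ∨ p = 2) :
    eLpNorm (fun x => ∫⁻ s, G s x ∂ν) p μ ≤ ∫⁻ s, eLpNorm (G s) p μ ∂ν := by
  rcases hp with rfl | rfl
  · exact (eLpNorm_one_lintegral hG).le
  · exact eLpNorm_two_lintegral_le hG

theorem eLpNorm_integral_le_lintegral_eLpNorm {E : Type*} [NormedAddCommGroup E]
    [NormedSpace ℝ E] {g : α → β → E} (hg : StronglyMeasurable (uncurry g)) {p : ℝ≥0∞}
    (hp : p = 1 ∨ p = 2) :
    eLpNorm (fun x => ∫ s, g s x ∂ν) p μ ≤ ∫⁻ s, eLpNorm (g s) p μ ∂ν := calc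
  _ ≤ eLpNorm (fun x => ∫⁻ s, ‖g s x‖ₑ ∂ν) p μ :=
    eLpNorm_mono_enorm fun x => enorm_integral_le_lintegral_enorm _
  _ ≤ ∫⁻ s, eLpNorm (fun x => ‖g s x‖ₑ) p μ ∂ν :=
    eLpNorm_lintegral_le (G := fun s x => ‖g s x‖ₑ) hg.enorm hp
  _ = ∫⁻ s, eLpNorm (g s) p μ ∂ν := by simp only [eLpNorm_enorm]

end Minkowski

section DilationAverage

variable {α : Type*} [MeasurableSpace α] (μ : Measure α) (f : α → ℝ) (v₀ : ℝ → ℝ)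

noncomputable def dilationAverage (x : ℝ) : ℝ :=
  ∫ s in support f, |f s|⁻¹ * v₀ (x / f s) ∂μ

variable {μ f v₀}

theorem measurable_dilationAverage_integrand (hf : Measurable f) (hv₀ : Measurable v₀) :
    Measurable (uncurry fun s x => |f s|⁻¹ * v₀ (x / f s)) :=
  (hf.comp measurable_fst).abs.inv.mul
    (hv₀.comp (measurable_snd.div (hf.comp measurable_fst)))

variable [SFinite μ]

theorem stronglyMeasurable_dilationAverage (hf : Measurable f) (hv₀ : Measurable v₀) :
    StronglyMeasurable (dilationAverage μ f v₀) :=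
  (measurable_dilationAverage_integrand hf hv₀).stronglyMeasurable.integral_prod_left

theorem eLpNorm_id_mul_dilationAverage_le (hf : Measurable f) (hv₀ : Measurable v₀)
    {p : ℝ≥0∞} (hp : p = 1 ∨ p = 2) :
    eLpNorm (fun x => x * dilationAverage μ f v₀ x) p volume ≤
      eLpNorm (fun x => x * v₀ x) p volume *
        ∫⁻ s in support f, ENNReal.ofReal |f s| ^ (1 / p).toReal ∂μ := by
  set g : α → ℝ → ℝ := fun s x => x * (|f s|⁻¹ * v₀ (x / f s))
  have hg : StronglyMeasurable (uncurry g) :=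
    (measurable_snd.mul (measurable_dilationAverage_integrand hf hv₀)).stronglyMeasurable
  have hg_eLpNorm : ∀ s ∈ support f, eLpNorm (g s) p volume =
      ENNReal.ofReal |f s| ^ (1 / p).toReal * eLpNorm (fun x => x * v₀ x) p volume := by
    intro s hs
    rw [← eLpNorm_comp_div_const (fun y => y * v₀ y) hs]
    refine eLpNorm_congr_norm_ae (ae_of_all _ fun x => ?_)
    simp only [g, Real.norm_eq_abs, abs_mul, abs_inv, abs_abs, div_eq_mul_inv]
    ring
  calc eLpNorm (fun x => x * dilationAverage μ f v₀ x) p volume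
      = eLpNorm (fun x => ∫ s in support f, g s x ∂μ) p volume := by
        simp only [g, dilationAverage, integral_const_mul]
    _ ≤ ∫⁻ s in support f, eLpNorm (g s) p volume ∂μ :=
        eLpNorm_integral_le_lintegral_eLpNorm hg hp
    _ = ∫⁻ s in support f, ENNReal.ofReal |f s| ^ (1 / p).toReal *
          eLpNorm (fun x => x * v₀ x) p volume ∂μ :=
        setLIntegral_congr_fun (measurableSet_support hf) hg_eLpNorm
    _ = _ := by
        rw [lintegral_mul_const _ (hf.abs.ennreal_ofReal.pow_const _), mul_comm]

end DilationAverage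

theorem uv1_memLp_general {d : ℕ} (f : (Fin d → ℝ) → ℝ) (v₀ : ℝ → ℝ)
    (hf : Measurable f)
    (hv₀ : Measurable v₀)
    (h1 : MemLp (fun x => x * v₀ x) 1 (volume : Measure ℝ))
    (h2 : MemLp (fun x => x * v₀ x) 2 (volume : Measure ℝ))
    (hfi1 : IntegrableOn (fun s => |f s|) (Function.support f))
    (hfi2 : IntegrableOn (fun s => Real.sqrt |f s|) (Function.support f))
    (v₁ : ℝ → ℝ)
    (hv₁ : ∀ x, v₁ x = ∫ s in Function.support f, |f s|⁻¹ * v₀ (x / f s)) :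
    MemLp (fun x => x * v₁ x) 1 (volume : Measure ℝ) ∧
    MemLp (fun x => x * v₁ x) 2 (volume : Measure ℝ) ∧
    eLpNorm (fun x => x * v₁ x) 1 (volume : Measure ℝ) ≤
      eLpNorm (fun x => x * v₀ x) 1 (volume : Measure ℝ) *
        ENNReal.ofReal (∫ s in Function.support f, |f s|) ∧
    eLpNorm (fun x => x * v₁ x) 2 (volume : Measure ℝ) ≤
      eLpNorm (fun x => x * v₀ x) 2 (volume : Measure ℝ) *
        ENNReal.ofReal (∫ s in Function.support f, Real.sqrt |f s|) := by
  obtain rfl : v₁ = dilationAverage volume f v₀ := funext hv₁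
  have hmeas : AEStronglyMeasurable (fun x => x * dilationAverage volume f v₀ x) volume :=
    (measurable_id.stronglyMeasurable.mul
      (stronglyMeasurable_dilationAverage hf hv₀)).aestronglyMeasurable
  have hI1 : ∫⁻ s in support f, ENNReal.ofReal |f s| ^ (1 / 1 : ℝ≥0∞).toReal =
      ENNReal.ofReal (∫ s in support f, |f s|) := by
    rw [ofReal_integral_eq_lintegral_ofReal hfi1 (ae_of_all _ fun _ => abs_nonneg _)]
    simp
  have hI2 : ∫⁻ s in support f, ENNReal.ofReal |f s| ^ (1 / 2 : ℝ≥0∞).toReal =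
      ENNReal.ofReal (∫ s in support f, Real.sqrt |f s|) := by
    rw [ofReal_integral_eq_lintegral_ofReal hfi2 (ae_of_all _ fun _ => Real.sqrt_nonneg _)]
    refine lintegral_congr fun s => ?_
    rw [ENNReal.ofReal_rpow_of_nonneg (abs_nonneg _) (by norm_num), Real.sqrt_eq_rpow]
    norm_num
  have hb1 := hI1 ▸ eLpNorm_id_mul_dilationAverage_le (μ := volume) hf hv₀ (.inl rfl)
  have hb2 := hI2 ▸ eLpNorm_id_mul_dilationAverage_le (μ := volume) hf hv₀ (.inr rfl)
  exact ⟨⟨hmeas, hb1.trans_lt (ENNReal.mul_lt_top h1.2 ENNReal.ofReal_lt_top)⟩,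
    ⟨hmeas, hb2.trans_lt (ENNReal.mul_lt_top h2.2 ENNReal.ofReal_lt_top)⟩, hb1, hb2⟩

/-- If `f` has compact support and `u·v₀ ∈ L¹(ℝ) ∩ L²(ℝ)` (with `u(x) = x`), then for
`v₁(x) = ∫_{supp f} |f(s)|⁻¹ v₀(x / f(s)) ds` one has `u·v₁ ∈ L¹(ℝ) ∩ L²(ℝ)` with
`‖u v₁‖_{L^k} ≤ ‖u v₀‖_{L^k} ∫_{supp f} |f(s)|^{1/k} ds` for `k = 1, 2`. -/
theorem uv1_memLp {d : ℕ} (f : (Fin d → ℝ) → ℝ) (v₀ : ℝ → ℝ)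
    (hf : Measurable f) (hcs : HasCompactSupport f)
    (hv₀ : Measurable v₀)
    (h1 : MemLp (fun x => x * v₀ x) 1 (volume : Measure ℝ))
    (h2 : MemLp (fun x => x * v₀ x) 2 (volume : Measure ℝ))
    (hfi1 : IntegrableOn (fun s => |f s|) (Function.support f))
    (hfi2 : IntegrableOn (fun s => Real.sqrt |f s|) (Function.support f))
    (v₁ : ℝ → ℝ)
    (hv₁ : ∀ x, v₁ x = ∫ s in Function.support f, |f s|⁻¹ * v₀ (x / f s)) :
    MemLp (fun x => x * v₁ x) 1 (volume : Measure ℝ) ∧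
    MemLp (fun x => x * v₁ x) 2 (volume : Measure ℝ) ∧
    eLpNorm (fun x => x * v₁ x) 1 (volume : Measure ℝ) ≤
      eLpNorm (fun x => x * v₀ x) 1 (volume : Measure ℝ) *
        ENNReal.ofReal (∫ s in Function.support f, |f s|) ∧
    eLpNorm (fun x => x * v₁ x) 2 (volume : Measure ℝ) ≤
      eLpNorm (fun x => x * v₀ x) 2 (volume : Measure ℝ) *
        ENNReal.ofReal (∫ s in Function.support f, Real.sqrt |f s|) :=
  uv1_memLp_general f v₀ hf hv₀ h1 h2 hfi1 hfi2 v₁ hv₁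
end

section
/- Let ψ : ℝ → ℂ be a continuously differentiable function with ψ(0) = 1, |ψ(x)| ≤ 1, such that |ψ'(x)/ψ(x)²| = |F₊[u v₁](x)|/|ψ(x)| where |F₊[u v₁](x)| ≲ (1+x²)^{-1/2}, and suppose that x ↦ (1+x²)^{-(1−ε)/2}/ψ(x) ∈ L²(ℝ) for some ε ∈ (0, 1/2). Then 1/|ψ(x)| ≲ (1+|x|)^{1/2−ε} for all x ∈ ℝ. -/
open MeasureTheory Set Real intervalIntegral
open scoped Interval

/-!
Since `(ψ⁻¹)' = -ψ'/ψ²`, the hypotheses give `‖(ψ⁻¹)'(t)‖ ≤ (1+t²)^{-ε/2} h(t)` with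
`h = C (1+t²)^{-(1-ε)/2}/|ψ| ∈ L²`, where `|F(t)| ≤ C (1+t²)^{-1/2}`. By the fundamental
theorem of calculus and Cauchy–Schwarz, `1/|ψ(x)| ≤ 1 + ‖h‖₂ (∫_0^x (1+t²)^{-ε})^{1/2}`, and
`(1+t²)^{-ε} ≤ 2^ε (1+|t|)^{-2ε}` makes the last integral `O((1+|x|)^{1-2ε})` since `2ε < 1`.
-/

theorem norm_le_norm_zero_add_setIntegral_uIoc_norm_deriv {E : Type*} [NormedAddCommGroup E]
    [NormedSpace ℝ E] [CompleteSpace E] {g : ℝ → E} (hg : ContDiff ℝ 1 g) (x : ℝ) :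
    ‖g x‖ ≤ ‖g 0‖ + ∫ t in Ι 0 x, ‖deriv g t‖ := by
  have hFTC : ∫ t in 0..x, deriv g t = g x - g 0 :=
    integral_deriv_eq_sub (fun t _ => hg.differentiable one_ne_zero t)
      ((hg.continuous_deriv le_rfl).intervalIntegrable 0 x)
  calc ‖g x‖ = ‖g 0 + ∫ t in 0..x, deriv g t‖ := by rw [hFTC, add_sub_cancel]
    _ ≤ ‖g 0‖ + ‖∫ t in 0..x, deriv g t‖ := norm_add_le _ _
    _ ≤ ‖g 0‖ + ∫ t in Ι 0 x, ‖deriv g t‖ :=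
        add_le_add_right norm_integral_le_integral_norm_uIoc _

theorem setIntegral_mul_le_sqrt_mul_sqrt {α : Type*} [MeasurableSpace α] {μ : Measure α}
    (s : Set α) {f g : α → ℝ} (hf : 0 ≤ f) (hg : 0 ≤ g) (hf2 : MemLp f 2 (μ.restrict s))
    (hg2 : MemLp g 2 μ) :
    ∫ t in s, f t * g t ∂μ ≤ √(∫ t in s, f t ^ 2 ∂μ) * √(∫ t, g t ^ 2 ∂μ) := by
  have hHolder := integral_mul_le_Lp_mul_Lq_of_nonneg Real.HolderConjugate.two_two
    (Filter.Eventually.of_forall hf) (Filter.Eventually.of_forall hg)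
    (by simpa using hf2) (by simpa using hg2.restrict s)
  simp only [rpow_two, ← sqrt_eq_rpow] at hHolder
  refine hHolder.trans (mul_le_mul_of_nonneg_left (sqrt_le_sqrt ?_) (sqrt_nonneg _))
  exact setIntegral_le_integral hg2.integrable_sq (Filter.Eventually.of_forall fun t => sq_nonneg _)

theorem one_add_sq_rpow_neg_le {ε t : ℝ} (hε : 0 ≤ ε) (ht : 0 ≤ t) :
    (1 + t ^ 2) ^ (-ε) ≤ 2 ^ ε * (1 + t) ^ (-(2 * ε)) := by
  have hsq : (1 + t) ^ 2 ≤ 2 * (1 + t ^ 2) := by nlinarith [sq_nonneg (1 - t)]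
  calc (1 + t ^ 2) ^ (-ε) = 2 ^ ε * (2 * (1 + t ^ 2)) ^ (-ε) := by
        rw [mul_rpow zero_le_two (by positivity), ← mul_assoc, ← rpow_add two_pos]
        simp
    _ ≤ 2 ^ ε * ((1 + t) ^ 2) ^ (-ε) :=
        mul_le_mul_of_nonneg_left
          (rpow_le_rpow_of_nonpos (by positivity) hsq (neg_nonpos.mpr hε)) (by positivity)
    _ = 2 ^ ε * (1 + t) ^ (-(2 * ε)) := by
        rw [← rpow_natCast, ← rpow_mul (by positivity)]
        ring_nf

theorem integral_one_add_sq_rpow_neg_le {ε X : ℝ} (hε0 : 0 ≤ ε) (hε : ε < 1 / 2) (hX : 0 ≤ X) :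
    ∫ t in 0..X, (1 + t ^ 2) ^ (-ε) ≤ 2 ^ ε / (1 - 2 * ε) * (1 + X) ^ (1 - 2 * ε) := by
  have hd : 0 < 1 - 2 * ε := by linarith
  have hweight : Continuous fun t : ℝ => (1 + t ^ 2) ^ (-ε) :=
    (by fun_prop : Continuous fun t : ℝ => 1 + t ^ 2).rpow_const fun t => Or.inl (by positivity)
  have hcont : ContinuousOn (fun t : ℝ => (2:ℝ) ^ ε * (1 + t) ^ (-(2 * ε))) [[0, X]] := by
    refine continuousOn_const.mul (ContinuousOn.rpow_const (by fun_prop) fun t ht => ?_)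
    rw [uIcc_of_le hX] at ht
    exact Or.inl (by linarith [ht.1])
  have hprimitive :
      ∫ t in 0..X, (1 + t) ^ (-(2 * ε)) = ((1 + X) ^ (1 - 2 * ε) - 1) / (1 - 2 * ε) := by
    rw [integral_comp_add_left (fun u : ℝ => u ^ (-(2 * ε))),
      integral_rpow (Or.inl (by linarith))]
    norm_num
    ring_nf
  calc ∫ t in 0..X, (1 + t ^ 2) ^ (-ε)
      ≤ ∫ t in 0..X, 2 ^ ε * (1 + t) ^ (-(2 * ε)) :=
        integral_mono_on hX (hweight.intervalIntegrable _ _) hcont.intervalIntegrable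
          fun t ht => one_add_sq_rpow_neg_le hε0 ht.1
    _ = 2 ^ ε / (1 - 2 * ε) * ((1 + X) ^ (1 - 2 * ε) - 1) := by
        rw [intervalIntegral.integral_const_mul, hprimitive]
        ring
    _ ≤ 2 ^ ε / (1 - 2 * ε) * (1 + X) ^ (1 - 2 * ε) := by
        gcongr
        linarith

theorem setIntegral_uIoc_one_add_sq_rpow_neg_le {ε : ℝ} (hε0 : 0 ≤ ε) (hε : ε < 1 / 2) (x : ℝ) :
    ∫ t in Ι 0 x, (1 + t ^ 2) ^ (-ε) ≤ 2 ^ ε / (1 - 2 * ε) * (1 + |x|) ^ (1 - 2 * ε) := by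
  suffices ∫ t in Ι 0 x, (1 + t ^ 2) ^ (-ε) = ∫ t in 0..|x|, (1 + t ^ 2) ^ (-ε) by
    rw [this]
    exact integral_one_add_sq_rpow_neg_le hε0 hε (abs_nonneg x)
  rcases le_total 0 x with hx | hx
  · rw [uIoc_of_le hx, abs_of_nonneg hx, integral_of_le hx]
  · rw [uIoc_of_ge hx, abs_of_nonpos hx, ← integral_of_le hx]
    have := integral_comp_neg (a := 0) (b := -x) fun t : ℝ => (1 + t ^ 2) ^ (-ε)
    simp only [neg_sq, neg_neg, neg_zero] at this
    exact this.symm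

theorem exists_norm_le_add_mul_one_add_abs_rpow {E : Type*} [NormedAddCommGroup E]
    [NormedSpace ℝ E] [CompleteSpace E] {g : ℝ → E} (hg : ContDiff ℝ 1 g) {ε : ℝ} (hε0 : 0 ≤ ε)
    (hε : ε < 1 / 2) {h : ℝ → ℝ} (h0 : 0 ≤ h) (hL2 : MemLp h 2 volume)
    (hderiv : ∀ t, ‖deriv g t‖ ≤ (1 + t ^ 2) ^ (-ε / 2) * h t) :
    ∃ K, ∀ x, ‖g x‖ ≤ ‖g 0‖ + K * (1 + |x|) ^ (1 / 2 - ε) := by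
  set w : ℝ → ℝ := fun t => (1 + t ^ 2) ^ (-ε / 2)
  have hw_cont : Continuous w :=
    (by fun_prop : Continuous fun t : ℝ => 1 + t ^ 2).rpow_const fun t => Or.inl (by positivity)
  have hw_nonneg : 0 ≤ w := fun t => by positivity
  have hw_le_one : ∀ t, ‖w t‖ ≤ 1 := fun t => by
    rw [norm_of_nonneg (hw_nonneg t)]
    exact rpow_le_one_of_one_le_of_nonpos (by nlinarith [sq_nonneg t]) (by linarith)
  have hw_sq : ∀ t, w t ^ 2 = (1 + t ^ 2) ^ (-ε) := fun t => by
    rw [← rpow_natCast, ← rpow_mul (by positivity)]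
    ring_nf
  refine ⟨√(2 ^ ε / (1 - 2 * ε)) * √(∫ t, h t ^ 2), fun x => ?_⟩
  have : IsFiniteMeasure (volume.restrict (Ι (0:ℝ) x)) := isFiniteMeasure_restrict_Ioc _ _
  have hw_L2 : MemLp w 2 (volume.restrict (Ι 0 x)) :=
    MemLp.of_bound hw_cont.aestronglyMeasurable 1 (ae_of_all _ hw_le_one)
  have hwh : IntegrableOn (fun t => w t * h t) (Ι 0 x) :=
    ((hL2.restrict _).integrable one_le_two).bdd_mul hw_cont.aestronglyMeasurable
      (ae_of_all _ hw_le_one)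
  calc ‖g x‖ ≤ ‖g 0‖ + ∫ t in Ι 0 x, ‖deriv g t‖ :=
        norm_le_norm_zero_add_setIntegral_uIoc_norm_deriv hg x
    _ ≤ ‖g 0‖ + ∫ t in Ι 0 x, w t * h t := add_le_add_right
        (integral_mono_of_nonneg (ae_of_all _ fun t => norm_nonneg _) hwh (ae_of_all _ hderiv)) _
    _ ≤ ‖g 0‖ + √(∫ t in Ι 0 x, w t ^ 2) * √(∫ t, h t ^ 2) := by
        gcongr
        exact setIntegral_mul_le_sqrt_mul_sqrt _ hw_nonneg h0 hw_L2 hL2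
    _ ≤ ‖g 0‖ + √(2 ^ ε / (1 - 2 * ε) * (1 + |x|) ^ (1 - 2 * ε)) * √(∫ t, h t ^ 2) := by
        simp only [hw_sq]
        gcongr
        exact setIntegral_uIoc_one_add_sq_rpow_neg_le hε0 hε x
    _ = ‖g 0‖ + √(2 ^ ε / (1 - 2 * ε)) * √(∫ t, h t ^ 2) * (1 + |x|) ^ (1 / 2 - ε) := by
        have hsqrt : √((1 + |x|) ^ (1 - 2 * ε)) = (1 + |x|) ^ (1 / 2 - ε) := by
          rw [sqrt_eq_rpow, ← rpow_mul (by positivity)]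
          ring_nf
        rw [sqrt_mul' _ (by positivity), hsqrt]
        ring

theorem inv_psi_growth_general (ψ : ℝ → ℂ) (F : ℝ → ℂ) (ε : ℝ)
    (hε : ε ∈ Set.Ioo (0 : ℝ) (1/2))
    (hC1 : ContDiff ℝ 1 ψ)
    (hψ0 : ψ 0 = 1)
    (hψne : ∀ x, ψ x ≠ 0)
    (hratio : ∀ x, ‖deriv ψ x / (ψ x) ^ 2‖ = ‖F x‖ / ‖ψ x‖)
    (hF : ∃ C : ℝ, ∀ x, ‖F x‖ ≤ C * (1 + x ^ 2) ^ (-(1/2) : ℝ))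
    (hL2 : MemLp (fun x : ℝ => ((1 + x ^ 2) ^ (-(1 - ε)/2) : ℝ) / ψ x) 2
      (volume : Measure ℝ)) :
    ∃ C : ℝ, ∀ x : ℝ, 1 / ‖ψ x‖ ≤ C * (1 + |x|) ^ ((1/2 : ℝ) - ε) := by
  obtain ⟨C, hF⟩ := hF
  have hC : 0 ≤ C := by simpa using (norm_nonneg _).trans (hF 0)
  set h : ℝ → ℝ := fun t => C * ((1 + t ^ 2) ^ (-(1 - ε) / 2) / ‖ψ t‖)
  have hh_L2 : MemLp h 2 volume := (hL2.norm.const_mul C).ae_eq (ae_of_all _ fun t => by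
    simp [h, abs_of_nonneg (rpow_nonneg (by positivity : (0:ℝ) ≤ 1 + t ^ 2) _)])
  have hderiv : ∀ t, ‖deriv (fun y => (ψ y)⁻¹) t‖ ≤ (1 + t ^ 2) ^ (-ε / 2) * h t := fun t => by
    have hsplit : (1 + t ^ 2) ^ (-(1 / 2) : ℝ)
        = (1 + t ^ 2) ^ (-ε / 2) * (1 + t ^ 2) ^ (-(1 - ε) / 2) := by
      rw [← rpow_add (by positivity)]
      ring_nf
    rw [deriv_fun_inv'' (hC1.differentiable one_ne_zero t) (hψne t), neg_div, norm_neg, hratio]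
    calc ‖F t‖ / ‖ψ t‖ ≤ C * (1 + t ^ 2) ^ (-(1 / 2) : ℝ) / ‖ψ t‖ := by gcongr; exact hF t
      _ = (1 + t ^ 2) ^ (-ε / 2) * h t := by rw [hsplit]; ring
  obtain ⟨K, hK⟩ := exists_norm_le_add_mul_one_add_abs_rpow (hC1.inv hψne) hε.1.le hε.2
    (fun t => by positivity) hh_L2 hderiv
  refine ⟨1 + K, fun x => ?_⟩
  have hone_le : 1 ≤ (1 + |x|) ^ ((1 / 2 : ℝ) - ε) :=
    one_le_rpow (by linarith [abs_nonneg x]) (by linarith [hε.2])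
  have hx := hK x
  simp only [Pi.inv_apply, norm_inv, hψ0, norm_one, inv_one] at hx
  rw [one_div]
  linarith

/-- If `ψ : ℝ → ℂ` is C¹ with `ψ(0) = 1`, `|ψ| ≤ 1`, nonvanishing,
`|ψ'(x)/ψ(x)²| = |F(x)|/|ψ(x)|` with `|F(x)| ≲ (1+x²)^{-1/2}` (here `F = F₊[u v₁]`),
and `x ↦ (1+x²)^{-(1-ε)/2}/ψ(x) ∈ L²(ℝ)` for some `ε ∈ (0,1/2)`, then
`1/|ψ(x)| ≲ (1+|x|)^{1/2-ε}`. -/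
theorem inv_psi_growth (ψ : ℝ → ℂ) (F : ℝ → ℂ) (ε : ℝ)
    (hε : ε ∈ Set.Ioo (0 : ℝ) (1/2))
    (hC1 : ContDiff ℝ 1 ψ)
    (hψ0 : ψ 0 = 1)
    (hψle : ∀ x, ‖ψ x‖ ≤ 1)
    (hψne : ∀ x, ψ x ≠ 0)
    (hratio : ∀ x, ‖deriv ψ x / (ψ x) ^ 2‖ = ‖F x‖ / ‖ψ x‖)
    (hF : ∃ C : ℝ, ∀ x, ‖F x‖ ≤ C * (1 + x ^ 2) ^ (-(1/2) : ℝ))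
    (hL2 : MemLp (fun x : ℝ => ((1 + x ^ 2) ^ (-(1 - ε)/2) : ℝ) / ψ x) 2
      (volume : Measure ℝ)) :
    ∃ C : ℝ, ∀ x : ℝ, 1 / ‖ψ x‖ ≤ C * (1 + |x|) ^ ((1/2 : ℝ) - ε) :=
  inv_psi_growth_general ψ F ε hε hC1 hψ0 hψne hratio hF hL2
end

section
/- Let (X_j)_{j∈V}, V ⊆ ℤ^d finite, be a centered m-dependent random field with 0 < E X_j² < ∞ and satisfying the Bernstein condition |E X_j^p| ≤ (p!/2) H^{p−2} E X_j² for all p ≥ 3, j ∈ V, for some H > 0. Suppose moreover |X_j| ≤ 2 almost surely (so the condition holds with H = 2). Then for S_V = Σ_{j∈V} X_j and any x ≥ 0, P(|S_V| ≥ x) ≤ 2 exp( − x² / (8 (m+1)^d (x + 2|V|)) ). -/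
/-!
Reducing the coordinates modulo `m + 1` splits `V` into `(m + 1) ^ d` classes whose points are
pairwise more than `m` apart, so each class is an independent family. By Hoeffding's lemma every
`X j` has a sub-Gaussian MGF with variance proxy `4`, so each class sum has proxy
`4 · #class`. The class sums themselves are dependent, but sub-Gaussian proxies of arbitrary
summands add as square roots, which by Cauchy–Schwarz costs only a factor `(m + 1) ^ d`.
The Chernoff bound for the proxy `4 (m + 1) ^ d #V` applied to `S_V` and `-S_V` gives
`P(|S_V| ≥ x) ≤ 2 exp(-x² / (8 (m + 1) ^ d #V))`, which is stronger than the claim.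
-/

open MeasureTheory ProbabilityTheory Finset
open scoped NNReal

namespace ProbabilityTheory.HasSubgaussianMGF

variable {Ω ι : Type*} [MeasurableSpace Ω] {μ : Measure Ω}

lemma mono {X : Ω → ℝ} {c c' : ℝ≥0} (h : HasSubgaussianMGF X c μ) (hc : c ≤ c') :
    HasSubgaussianMGF X c' μ where
  integrable_exp_mul := h.integrable_exp_mul
  mgf_le t := (h.mgf_le t).trans (Real.exp_le_exp.2 (by gcongr))

lemma measure_abs_ge_le [IsFiniteMeasure μ] {X : Ω → ℝ} {c : ℝ≥0}
    (h : HasSubgaussianMGF X c μ) {ε : ℝ} (hε : 0 ≤ ε) :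
    μ {ω | ε ≤ |X ω|} ≤ ENNReal.ofReal (2 * Real.exp (-ε ^ 2 / (2 * c))) := by
  have hsplit : {ω | ε ≤ |X ω|} = {ω | ε ≤ X ω} ∪ {ω | ε ≤ (-X) ω} := by
    ext ω; simp [le_abs]
  calc μ {ω | ε ≤ |X ω|} ≤ μ {ω | ε ≤ X ω} + μ {ω | ε ≤ (-X) ω} :=
        hsplit ▸ measure_union_le _ _
    _ = ENNReal.ofReal (μ.real {ω | ε ≤ X ω} + μ.real {ω | ε ≤ (-X) ω}) := by
      rw [ENNReal.ofReal_add measureReal_nonneg measureReal_nonneg, ofReal_measureReal,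
        ofReal_measureReal]
    _ ≤ _ := ENNReal.ofReal_le_ofReal (by linarith [h.measure_ge_le hε, h.neg.measure_ge_le hε])

variable [IsZeroOrProbabilityMeasure μ] {X : ι → Ω → ℝ} {c : ι → ℝ≥0} {s : Finset ι}

lemma sum (h : ∀ i ∈ s, HasSubgaussianMGF (X i) (c i) μ) :
    HasSubgaussianMGF (fun ω ↦ ∑ i ∈ s, X i ω) ((∑ i ∈ s, (c i).sqrt) ^ 2) μ := by
  classical
  induction s using Finset.induction_on with
  | empty => simp [fun_zero]
  | insert a s ha ih =>
    simp_rw [sum_insert ha]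
    have := (h a (mem_insert_self a s)).add (ih fun i hi ↦ h i (mem_insert_of_mem hi))
    rwa [NNReal.sqrt_sq] at this

lemma sum_card_mul (h : ∀ i ∈ s, HasSubgaussianMGF (X i) (c i) μ) :
    HasSubgaussianMGF (fun ω ↦ ∑ i ∈ s, X i ω) (#s * ∑ i ∈ s, c i) μ :=
  (sum h).mono (by simpa using sq_sum_le_card_mul_sum_sq (s := s) (f := fun i ↦ (c i).sqrt))

lemma sum_of_indepFun_restrict [DecidableEq ι]
    (hindep : ∀ S T : Finset ι, S ⊆ s → T ⊆ s → Disjoint S T →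
      IndepFun (fun ω (i : S) ↦ X i ω) (fun ω (i : T) ↦ X i ω) μ)
    (h : ∀ i ∈ s, HasSubgaussianMGF (X i) (c i) μ) :
    HasSubgaussianMGF (fun ω ↦ ∑ i ∈ s, X i ω) (∑ i ∈ s, c i) μ := by
  induction s using Finset.induction_on with
  | empty => simp [fun_zero]
  | insert a s ha ih =>
    simp_rw [sum_insert ha]
    have hsum : IndepFun (X a) (fun ω ↦ ∑ i ∈ s, X i ω) μ := by
      have := (hindep {a} s (by simp) (subset_insert a s) (disjoint_singleton_left.2 ha)).comp
        (measurable_pi_apply ⟨a, mem_singleton_self a⟩)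
        (measurable_sum univ fun i _ ↦ measurable_pi_apply i)
      convert this using 1
      exacts [rfl, funext fun ω ↦ (sum_coe_sort s (X · ω)).symm]
    refine (h a (mem_insert_self a s)).add_of_indepFun (ih ?_ ?_) hsum
    · exact fun S T hS hT ↦ hindep S T (hS.trans (subset_insert a s)) (hT.trans (subset_insert a s))
    · exact fun i hi ↦ h i (mem_insert_of_mem hi)

end ProbabilityTheory.HasSubgaussianMGF

lemma ProbabilityTheory.hasSubgaussianMGF_of_abs_le_of_integral_eq_zero {Ω : Type*}
    [MeasurableSpace Ω] {μ : Measure Ω} [IsProbabilityMeasure μ] {X : Ω → ℝ} {b : ℝ≥0}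
    (hm : AEMeasurable X μ) (hb : ∀ᵐ ω ∂μ, |X ω| ≤ b) (hc : μ[X] = 0) :
    HasSubgaussianMGF X (b ^ 2) μ := by
  have := hasSubgaussianMGF_of_mem_Icc_of_integral_eq_zero hm (a := -b) (b := b)
    (by filter_upwards [hb] with ω hω using abs_le.1 hω) hc
  convert this using 2
  rw [sub_neg_eq_add, ← two_mul, nnnorm_mul, NNReal.nnnorm_eq]
  simp

lemma lt_dist_of_intCast_zmod_eq {ι : Type*} [Fintype ι] {m : ℕ} {j j' : ι → ℤ} (hne : j ≠ j')
    (hres : (fun i ↦ (j i : ZMod (m + 1))) = fun i ↦ (j' i : ZMod (m + 1))) :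
    (m : ℝ) < dist j j' := by
  obtain ⟨i, hi⟩ := Function.ne_iff.1 hne
  have hdvd : ((m + 1 : ℕ) : ℤ) ∣ j' i - j i :=
    (ZMod.intCast_eq_intCast_iff_dvd_sub _ _ _).1 (congrFun hres i)
  have hle : (m : ℤ) + 1 ≤ |j' i - j i| :=
    mod_cast Int.le_of_dvd (abs_pos.2 (sub_ne_zero.2 (Ne.symm hi))) ((dvd_abs _ _).2 hdvd)
  calc (m : ℝ) < m + 1 := lt_add_one _
    _ ≤ dist (j i) (j' i) := by rw [dist_comm, Int.dist_eq]; exact_mod_cast hle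
    _ ≤ dist j j' := dist_le_pi_dist j j' i

lemma hasSubgaussianMGF_sum_of_mDependent {d m : ℕ} {Ω : Type*} [MeasurableSpace Ω]
    {P : Measure Ω} [IsZeroOrProbabilityMeasure P] {V : Finset (Fin d → ℤ)}
    {X : (Fin d → ℤ) → Ω → ℝ} {c : ℝ≥0}
    (hmdep : ∀ S T : Finset (Fin d → ℤ), (∀ s ∈ S, ∀ t ∈ T, (m : ℝ) < dist s t) →
      IndepFun (fun ω (s : S) ↦ X s ω) (fun ω (t : T) ↦ X t ω) P)
    (h : ∀ j ∈ V, HasSubgaussianMGF (X j) c P) :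
    HasSubgaussianMGF (fun ω ↦ ∑ j ∈ V, X j ω) ((m + 1) ^ d * (#V * c)) P := by
  classical
  let r : (Fin d → ℤ) → Fin d → ZMod (m + 1) := fun j i ↦ j i
  have hclass : ∀ k, HasSubgaussianMGF (fun ω ↦ ∑ j ∈ V with r j = k, X j ω)
      (∑ j ∈ V with r j = k, c) P := fun k ↦
    HasSubgaussianMGF.sum_of_indepFun_restrict
      (fun S T hS hT hST ↦ hmdep S T fun s hs t ht ↦ lt_dist_of_intCast_zmod_eq
        (fun hst ↦ disjoint_left.1 hST hs (hst ▸ ht))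
        ((mem_filter.1 (hS hs)).2.trans (mem_filter.1 (hT ht)).2.symm))
      fun j hj ↦ h j (mem_filter.1 hj).1
  have hsum := HasSubgaussianMGF.sum_card_mul (s := univ) fun k _ ↦ hclass k
  simp only [sum_fiberwise] at hsum
  simpa [ZMod.card] using hsum

theorem bernstein_m_dependent_general {d : ℕ} {Ω : Type*} [MeasurableSpace Ω]
    (P : Measure Ω) [IsProbabilityMeasure P]
    (V : Finset (Fin d → ℤ)) (X : (Fin d → ℤ) → Ω → ℝ) (m : ℕ)
    (hmeas : ∀ j, Measurable (X j))
    (hmdep : ∀ S T : Finset (Fin d → ℤ),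
      (∀ s ∈ S, ∀ t ∈ T, (m : ℝ) < dist s t) →
      IndepFun (fun ω => fun s : S => X s ω) (fun ω => fun t : T => X t ω) P)
    (hcent : ∀ j ∈ V, (∫ ω, X j ω ∂P) = 0)
    (hbdd : ∀ j ∈ V, ∀ᵐ ω ∂P, |X j ω| ≤ 2) :
    ∀ x : ℝ, 0 ≤ x →
      P {ω | x ≤ |∑ j ∈ V, X j ω|} ≤
        ENNReal.ofReal
          (2 * Real.exp (-(x ^ 2) / (8 * (m + 1 : ℝ) ^ d * (x + 2 * V.card)))) := by
  intro x hx
  have hX : ∀ j ∈ V, HasSubgaussianMGF (X j) (2 ^ 2) P := fun j hj ↦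
    hasSubgaussianMGF_of_abs_le_of_integral_eq_zero (hmeas j).aemeasurable
      (by simpa using hbdd j hj) (hcent j hj)
  have hproxy : ((m : ℝ≥0) + 1) ^ d * (#V * 2 ^ 2) ≤ 4 * (m + 1) ^ d * (x.toNNReal + 2 * #V) :=
    calc ((m : ℝ≥0) + 1) ^ d * (#V * 2 ^ 2) = 4 * (m + 1) ^ d * #V := by ring
      _ ≤ 4 * (m + 1) ^ d * (x.toNNReal + 2 * #V) := by
        gcongr; exact le_add_left (le_mul_of_one_le_left zero_le one_le_two)
  refine (((hasSubgaussianMGF_sum_of_mDependent hmdep hX).mono hproxy).measure_abs_ge_le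
    hx).trans_eq ?_
  push_cast [Real.coe_toNNReal x hx]
  ring_nf

/-- Bernstein-type exponential inequality for a centered `m`-dependent random field
`(X_j)_{j ∈ V}`, `V ⊆ ℤ^d` finite, with `|X_j| ≤ 2` a.s. and positive variances:
`P(|S_V| ≥ x) ≤ 2 exp(−x²/(8(m+1)^d (x + 2|V|)))` for all `x ≥ 0`. -/
theorem bernstein_m_dependent {d : ℕ} {Ω : Type*} [MeasurableSpace Ω]
    (P : Measure Ω) [IsProbabilityMeasure P]
    (V : Finset (Fin d → ℤ)) (X : (Fin d → ℤ) → Ω → ℝ) (m : ℕ)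
    (hmeas : ∀ j, Measurable (X j))
    (hmdep : ∀ S T : Finset (Fin d → ℤ),
      (∀ s ∈ S, ∀ t ∈ T, (m : ℝ) < dist s t) →
      IndepFun (fun ω => fun s : S => X s ω) (fun ω => fun t : T => X t ω) P)
    (hcent : ∀ j ∈ V, (∫ ω, X j ω ∂P) = 0)
    (hvarpos : ∀ j ∈ V, 0 < ∫ ω, (X j ω) ^ 2 ∂P)
    (hbdd : ∀ j ∈ V, ∀ᵐ ω ∂P, |X j ω| ≤ 2) :
    ∀ x : ℝ, 0 ≤ x →
      P {ω | x ≤ |∑ j ∈ V, X j ω|} ≤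
        ENNReal.ofReal
          (2 * Real.exp (-(x ^ 2) / (8 * (m + 1 : ℝ) ^ d * (x + 2 * V.card)))) :=
  bernstein_m_dependent_general P V X m hmeas hmdep hcent hbdd
end

section
/- Let (X_j)_{j∈ℤ^d} be a stationary m-dependent random field, (B_n) a sequence of finite subsets of ℤ^d regularly growing to infinity, and g^{(1)}, g^{(2)}, g_n^{(1)}, g_n^{(2)} : ℝ → ℝ measurable functions such that E[g_n^{(k)}(X_0)] = 0 for all n and k = 1,2, E[g^{(k)}(X_0)²] and E[g_n^{(k)}(X_0)²] are finite, and E[g_n^{(1)}(X_0) g_n^{(2)}(X_k)] → E[g^{(1)}(X_0) g^{(2)}(X_k)] =: σ_k for each k ∈ ℤ^d. Then Cov( |B_n|^{−1/2} Σ_{j∈B_n} g_n^{(1)}(X_j), |B_n|^{−1/2} Σ_{k∈B_n} g_n^{(2)}(X_k) ) → Σ_{t∈ℤ^d, ‖t‖_∞ ≤ m} σ_t as n → ∞. -/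
/-!
Expanding the product, stationarity turns the covariance into
`|B|⁻¹ Σ_{j,k ∈ B} σₙ(k - j)`, where `σₙ(t) = E[gₙ⁽¹⁾(X₀) gₙ⁽²⁾(Xₜ)]`. By `m`-dependence and
centering, `σₙ` vanishes outside the box `‖t‖_∞ ≤ m`, so the covariance equals
`Σ_{‖t‖_∞ ≤ m} σₙ(t) · #{j ∈ B | j + t ∈ B} / |B|`. A point `j ∈ B` with `j + t ∉ B` lies
within `ℓ^∞`-distance `m` of the boundary of `B`, so at most `(2m+1)^d |∂B|` points are lost and
the ratio tends to `1`; since `σₙ(t) → σ_t` the finite sum converges termwise.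
-/

open MeasureTheory ProbabilityTheory Filter

/-- Boundary of a set of lattice points: points outside at `ℓ^∞`-distance 1. -/
def latticeBoundary {d : ℕ} (A : Set (Fin d → ℤ)) : Set (Fin d → ℤ) :=
  {j | j ∉ A ∧ ∃ x ∈ A, ∀ i, |j i - x i| ≤ 1}

open Finset

def IsStationaryField {G Ω : Type*} [Add G] [MeasurableSpace Ω] (P : Measure Ω) (X : G → Ω → ℝ) :
    Prop :=
  ∀ t, Measure.map (fun ω j => X (j + t) ω) P = Measure.map (fun ω j => X j ω) P

namespace IsStationaryField

variable {G Ω : Type*} [AddGroup G] [MeasurableSpace Ω] {P : Measure Ω} {X : G → Ω → ℝ}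

theorem identDistrib_shift (hX : IsStationaryField P X) (hmeas : ∀ j, Measurable (X j)) (t : G) :
    IdentDistrib (fun ω j => X (j + t) ω) (fun ω j => X j ω) P P where
  aemeasurable_fst := (measurable_pi_lambda _ fun j => hmeas (j + t)).aemeasurable
  aemeasurable_snd := (measurable_pi_lambda _ hmeas).aemeasurable
  map_eq := hX t

theorem identDistrib (hX : IsStationaryField P X) (hmeas : ∀ j, Measurable (X j)) (t : G) :
    IdentDistrib (X t) (X 0) P P := by
  simpa [Function.comp_def] using (hX.identDistrib_shift hmeas t).comp (measurable_pi_apply 0)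

theorem memLp_comp (hX : IsStationaryField P X) (hmeas : ∀ j, Measurable (X j)) {f : ℝ → ℝ}
    (hf : Measurable f) {p : ENNReal} (h0 : MemLp (fun ω => f (X 0 ω)) p P) (j : G) :
    MemLp (fun ω => f (X j ω)) p P :=
  ((hX.identDistrib hmeas j).comp hf).memLp_iff.2 h0

theorem integral_mul_comp (hX : IsStationaryField P X) (hmeas : ∀ j, Measurable (X j))
    {f g : ℝ → ℝ} (hf : Measurable f) (hg : Measurable g) (j k : G) :
    ∫ ω, f (X j ω) * g (X k ω) ∂P = ∫ ω, f (X 0 ω) * g (X (k - j) ω) ∂P := by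
  have hF : Measurable fun y : G → ℝ => f (y 0) * g (y (k - j)) :=
    (hf.comp (measurable_pi_apply 0)).mul (hg.comp (measurable_pi_apply (k - j)))
  simpa using ((hX.identDistrib_shift hmeas j).comp hF).integral_eq

theorem integral_sum_mul_sum (hX : IsStationaryField P X) (hmeas : ∀ j, Measurable (X j))
    {f g : ℝ → ℝ} (hf : Measurable f) (hg : Measurable g)
    (hf2 : MemLp (fun ω => f (X 0 ω)) 2 P) (hg2 : MemLp (fun ω => g (X 0 ω)) 2 P)
    (A A' : Finset G) :
    ∫ ω, (∑ j ∈ A, f (X j ω)) * (∑ k ∈ A', g (X k ω)) ∂P =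
      ∑ j ∈ A, ∑ k ∈ A', ∫ ω, f (X 0 ω) * g (X (k - j) ω) ∂P := by
  have hint : ∀ j k, Integrable (fun ω => f (X j ω) * g (X k ω)) P := fun j k =>
    (hX.memLp_comp hmeas hf hf2 j).integrable_mul (hX.memLp_comp hmeas hg hg2 k)
  simp_rw [sum_mul_sum]
  rw [integral_finsetSum _ fun j _ => integrable_finsetSum _ fun k _ => hint j k]
  refine sum_congr rfl fun j _ => ?_
  rw [integral_finsetSum _ fun k _ => hint j k]
  exact sum_congr rfl fun k _ => hX.integral_mul_comp hmeas hf hg j k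

end IsStationaryField

theorem integral_mul_eq_zero_of_lt_dist {G Ω : Type*} [PseudoMetricSpace G] [MeasurableSpace Ω]
    {P : Measure Ω} {X : G → Ω → ℝ} {r : ℝ}
    (hdep : ∀ S T : Finset G, (∀ s ∈ S, ∀ t ∈ T, r < dist s t) →
      IndepFun (fun ω => fun s : S => X s ω) (fun ω => fun t : T => X t ω) P)
    (hmeas : ∀ j, Measurable (X j)) {f g : ℝ → ℝ} (hf : Measurable f) (hg : Measurable g)
    {j k : G} (hjk : r < dist j k) (hf0 : ∫ ω, f (X j ω) ∂P = 0) :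
    ∫ ω, f (X j ω) * g (X k ω) ∂P = 0 := by
  have hind : IndepFun (fun ω => f (X j ω)) (fun ω => g (X k ω)) P :=
    (hdep {j} {k} (by simpa using hjk)).comp
      (φ := fun v : ({j} : Finset G) → ℝ => f (v ⟨j, mem_singleton_self j⟩))
      (ψ := fun v : ({k} : Finset G) → ℝ => g (v ⟨k, mem_singleton_self k⟩))
      (hf.comp (measurable_pi_apply _)) (hg.comp (measurable_pi_apply _))
  rw [hind.integral_fun_mul_eq_mul_integral ((hf.comp (hmeas j)).aestronglyMeasurable)
    ((hg.comp (hmeas k)).aestronglyMeasurable), hf0, zero_mul]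

section Box

variable {d m : ℕ}

theorem mem_Icc_const_iff_abs_le {t : Fin d → ℤ} :
    t ∈ Icc (fun _ => -(m : ℤ)) (fun _ => (m : ℤ)) ↔ ∀ i, |t i| ≤ m := by
  simp only [mem_Icc, Pi.le_def, abs_le, forall_and]

theorem lt_dist_zero_of_notMem_Icc {t : Fin d → ℤ}
    (ht : t ∉ Icc (fun _ => -(m : ℤ)) (fun _ => (m : ℤ))) : (m : ℝ) < dist 0 t := by
  contrapose! ht
  refine mem_Icc_const_iff_abs_le.2 fun i => ?_
  have hi := (dist_pi_le_iff (Nat.cast_nonneg m)).1 ht i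
  rw [Int.dist_eq, abs_sub_comm] at hi
  exact_mod_cast (by simpa using hi : ((|t i| : ℤ) : ℝ) ≤ m)

theorem card_Icc_sub_add_const (b : Fin d → ℤ) :
    #(Icc (b - fun _ => (m : ℤ)) (b + fun _ => (m : ℤ))) = (2 * m + 1) ^ d := by
  rw [Pi.card_Icc]
  have hside : ∀ i, (Icc (b i - m) (b i + m)).card = 2 * m + 1 := fun i => by
    rw [Int.card_Icc]; omega
  simp [hside]

end Box

section Boundary

variable {d : ℕ}

theorem latticeBoundary_finite (A : Finset (Fin d → ℤ)) :
    (latticeBoundary (A : Set (Fin d → ℤ))).Finite := by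
  refine (A.biUnion fun x => Icc (x - 1) (x + 1)).finite_toSet.subset ?_
  rintro j ⟨-, x, hx, hjx⟩
  simp only [coe_biUnion, Set.mem_iUnion, mem_coe, mem_Icc, Pi.le_def]
  refine ⟨x, hx, fun i => ?_, fun i => ?_⟩ <;>
    have := abs_le.1 (hjx i) <;> simp only [Pi.sub_apply, Pi.add_apply, Pi.one_apply] <;> omega

/-- Walking from `j` towards `j + t` by steps of `ℓ^∞`-length one, the first point outside `A`
lies in its boundary. -/
theorem exists_mem_latticeBoundary_of_add_notMem {A : Set (Fin d → ℤ)} {j : Fin d → ℤ}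
    (hj : j ∈ A) {m : ℕ} {t : Fin d → ℤ} (ht : ∀ i, |t i| ≤ m) (hjt : j + t ∉ A) :
    ∃ b ∈ latticeBoundary A, ∀ i, |b i - j i| ≤ m := by
  induction m generalizing t with
  | zero =>
    have ht0 : t = 0 := funext fun i => abs_nonpos_iff.1 (by simpa using ht i)
    exact absurd (by simpa [ht0] using hj) hjt
  | succ m ih =>
    let s : Fin d → ℤ := fun i => max (-(m : ℤ)) (min m (t i))
    by_cases hs : j + s ∈ A
    · refine ⟨j + t, ⟨hjt, j + s, hs, fun i => ?_⟩, fun i => ?_⟩ <;>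
        have := abs_le.1 (ht i) <;> simp only [Pi.add_apply, s, abs_le] <;> push_cast at this ⊢ <;>
        omega
    · obtain ⟨b, hb, hbj⟩ := ih (t := s) (fun i => by simp only [s, abs_le]; omega) hs
      exact ⟨b, hb, fun i => (hbj i).trans (by push_cast; omega)⟩

theorem card_filter_add_notMem_le (m : ℕ) (A : Finset (Fin d → ℤ)) {t : Fin d → ℤ}
    (ht : ∀ i, |t i| ≤ m) :
    #{j ∈ A | j + t ∉ A} ≤ (2 * m + 1) ^ d * (latticeBoundary (A : Set (Fin d → ℤ))).ncard := by
  have hfin := latticeBoundary_finite A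
  have hsub : {j ∈ A | j + t ∉ A} ⊆
      hfin.toFinset.biUnion fun b => Icc (b - fun _ => (m : ℤ)) (b + fun _ => (m : ℤ)) := by
    intro j hj
    obtain ⟨hjA, hjt⟩ := mem_filter.1 hj
    obtain ⟨b, hb, hbj⟩ := exists_mem_latticeBoundary_of_add_notMem (mem_coe.2 hjA) ht hjt
    simp only [mem_biUnion, Set.Finite.mem_toFinset, mem_Icc, Pi.le_def]
    refine ⟨b, hb, fun i => ?_, fun i => ?_⟩ <;>
      have := abs_le.1 (hbj i) <;> simp only [Pi.sub_apply, Pi.add_apply] <;> omega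
  calc #{j ∈ A | j + t ∉ A}
      ≤ #hfin.toFinset * (2 * m + 1) ^ d :=
        (card_le_card hsub).trans
          (card_biUnion_le_card_mul _ _ _ fun b _ => (card_Icc_sub_add_const b).le)
    _ = (2 * m + 1) ^ d * (latticeBoundary (A : Set (Fin d → ℤ))).ncard := by
        rw [Set.ncard_eq_toFinset_card _ hfin, mul_comm]

theorem tendsto_card_filter_add_mem_div_card {m : ℕ} {B : ℕ → Finset (Fin d → ℤ)}
    (hBcard : Tendsto (fun n => #(B n)) atTop atTop)
    (hBreg : Tendsto (fun n =>
        ((latticeBoundary (B n : Set (Fin d → ℤ))).ncard : ℝ) / #(B n)) atTop (nhds 0))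
    {t : Fin d → ℤ} (ht : ∀ i, |t i| ≤ m) :
    Tendsto (fun n => (#{j ∈ B n | j + t ∈ B n} : ℝ) / #(B n)) atTop (nhds 1) := by
  have hlost : Tendsto (fun n => (#{j ∈ B n | j + t ∉ B n} : ℝ) / #(B n)) atTop (nhds 0) := by
    refine squeeze_zero (fun n => by positivity) (fun n => ?_)
      (by simpa using hBreg.const_mul (((2 * m + 1) ^ d : ℕ) : ℝ))
    rw [← mul_div_assoc]
    gcongr
    exact_mod_cast card_filter_add_notMem_le m (B n) ht
  refine (by simpa using tendsto_const_nhds.sub hlost : Tendsto _ _ (nhds (1 : ℝ))).congr' ?_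
  filter_upwards [hBcard.eventually_ge_atTop 1] with n hn
  have hsplit := card_filter_add_card_filter_not (s := B n) fun j => j + t ∈ B n
  rw [eq_div_iff (by positivity), sub_mul, div_mul_cancel₀ _ (by positivity), ← hsplit]
  push_cast
  ring

end Boundary

theorem sum_sum_sub_eq_sum_mul_card {G R : Type*} [AddCommGroup G] [DecidableEq G]
    [NonAssocSemiring R] (A K : Finset G) {c : G → R} (hc : ∀ t ∉ K, c t = 0) :
    ∑ j ∈ A, ∑ k ∈ A, c (k - j) = ∑ t ∈ K, c t * #{j ∈ A | j + t ∈ A} := by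
  have hc' : ∀ j k : G, c (k - j) = ∑ t ∈ K, if k - j = t then c t else 0 := fun j k => by
    rw [sum_ite_eq, ite_eq_left_iff.2 fun h => (hc _ h).symm]
  simp_rw [hc', sub_eq_iff_eq_add']
  rw [sum_congr rfl fun j _ => sum_comm, sum_comm]
  refine sum_congr rfl fun t _ => ?_
  simp_rw [sum_ite_eq']
  rw [← sum_filter, sum_const, nsmul_eq_mul']

theorem covariance_convergence_general {d : ℕ} {Ω : Type*} [MeasurableSpace Ω]
    (P : Measure Ω) (m : ℕ)
    (X : (Fin d → ℤ) → Ω → ℝ)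
    (hmeas : ∀ j, Measurable (X j))
    (hstat : ∀ t : Fin d → ℤ,
      Measure.map (fun ω => fun j => X (j + t) ω) P =
        Measure.map (fun ω => fun j => X j ω) P)
    (hmdep : ∀ S T : Finset (Fin d → ℤ),
      (∀ s ∈ S, ∀ t ∈ T, (m : ℝ) < dist s t) →
      IndepFun (fun ω => fun s : S => X s ω) (fun ω => fun t : T => X t ω) P)
    (B : ℕ → Finset (Fin d → ℤ))
    (hBcard : Tendsto (fun n => (B n).card) atTop atTop)
    (hBreg : Tendsto (fun n =>
        ((latticeBoundary (↑(B n) : Set (Fin d → ℤ))).ncard : ℝ) / ((B n).card : ℝ))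
      atTop (nhds 0))
    (g1 g2 : ℝ → ℝ) (gn1 gn2 : ℕ → ℝ → ℝ)
    (hgmeas : Measurable g1 ∧ Measurable g2 ∧ (∀ n, Measurable (gn1 n)) ∧
      ∀ n, Measurable (gn2 n))
    (hcent : ∀ n, (∫ ω, gn1 n (X 0 ω) ∂P) = 0 ∧ (∫ ω, gn2 n (X 0 ω) ∂P) = 0)
    (hL2 : MemLp (fun ω => g1 (X 0 ω)) 2 P ∧ MemLp (fun ω => g2 (X 0 ω)) 2 P ∧
      (∀ n, MemLp (fun ω => gn1 n (X 0 ω)) 2 P) ∧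
      ∀ n, MemLp (fun ω => gn2 n (X 0 ω)) 2 P)
    (hconv : ∀ k : Fin d → ℤ,
      Tendsto (fun n => ∫ ω, gn1 n (X 0 ω) * gn2 n (X k ω) ∂P) atTop
        (nhds (∫ ω, g1 (X 0 ω) * g2 (X k ω) ∂P))) :
    Tendsto (fun n => ((B n).card : ℝ)⁻¹ *
        ∫ ω, (∑ j ∈ B n, gn1 n (X j ω)) * (∑ k ∈ B n, gn2 n (X k ω)) ∂P)
      atTop
      (nhds (∑ t ∈ Finset.Icc (fun _ => -(m : ℤ)) (fun _ => (m : ℤ)),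
        ∫ ω, g1 (X 0 ω) * g2 (X t ω) ∂P)) := by
  obtain ⟨-, -, hgn1m, hgn2m⟩ := hgmeas
  obtain ⟨-, -, hgn1L, hgn2L⟩ := hL2
  have hstat : IsStationaryField P X := hstat
  have hvanish : ∀ n, ∀ t ∉ Icc (fun _ => -(m : ℤ)) (fun _ => (m : ℤ)),
      ∫ ω, gn1 n (X 0 ω) * gn2 n (X t ω) ∂P = 0 := fun n _ ht =>
    integral_mul_eq_zero_of_lt_dist hmdep hmeas (hgn1m n) (hgn2m n)
      (lt_dist_zero_of_notMem_Icc ht) (hcent n).1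
  have hcov : ∀ n, ((B n).card : ℝ)⁻¹ *
      ∫ ω, (∑ j ∈ B n, gn1 n (X j ω)) * (∑ k ∈ B n, gn2 n (X k ω)) ∂P =
      ∑ t ∈ Icc (fun _ => -(m : ℤ)) (fun _ => (m : ℤ)),
        (∫ ω, gn1 n (X 0 ω) * gn2 n (X t ω) ∂P) * (#{j ∈ B n | j + t ∈ B n} / #(B n)) := by
    intro n
    rw [hstat.integral_sum_mul_sum hmeas (hgn1m n) (hgn2m n) (hgn1L n) (hgn2L n),
      sum_sum_sub_eq_sum_mul_card _ _ (hvanish n), mul_sum]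
    exact sum_congr rfl fun t _ => by ring
  simp_rw [hcov]
  refine tendsto_finsetSum _ fun t ht => ?_
  simpa using (hconv t).mul
    (tendsto_card_filter_add_mem_div_card hBcard hBreg (mem_Icc_const_iff_abs_le.1 ht))

/-- Convergence of covariances of normalized sums over regularly growing sets for a
stationary `m`-dependent field: the covariance of
`|B_n|^{-1/2} Σ_{j∈B_n} g_n^{(1)}(X_j)` and `|B_n|^{-1/2} Σ_{k∈B_n} g_n^{(2)}(X_k)`
converges to `Σ_{‖t‖_∞ ≤ m} σ_t` with `σ_t = E[g^{(1)}(X_0) g^{(2)}(X_t)]`. -/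
theorem covariance_convergence {d : ℕ} {Ω : Type*} [MeasurableSpace Ω]
    (P : Measure Ω) [IsProbabilityMeasure P] (m : ℕ)
    (X : (Fin d → ℤ) → Ω → ℝ)
    (hmeas : ∀ j, Measurable (X j))
    (hstat : ∀ t : Fin d → ℤ,
      Measure.map (fun ω => fun j => X (j + t) ω) P =
        Measure.map (fun ω => fun j => X j ω) P)
    (hmdep : ∀ S T : Finset (Fin d → ℤ),
      (∀ s ∈ S, ∀ t ∈ T, (m : ℝ) < dist s t) →
      IndepFun (fun ω => fun s : S => X s ω) (fun ω => fun t : T => X t ω) P)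
    (B : ℕ → Finset (Fin d → ℤ))
    (hBcard : Tendsto (fun n => (B n).card) atTop atTop)
    (hBreg : Tendsto (fun n =>
        ((latticeBoundary (↑(B n) : Set (Fin d → ℤ))).ncard : ℝ) / ((B n).card : ℝ))
      atTop (nhds 0))
    (g1 g2 : ℝ → ℝ) (gn1 gn2 : ℕ → ℝ → ℝ)
    (hgmeas : Measurable g1 ∧ Measurable g2 ∧ (∀ n, Measurable (gn1 n)) ∧
      ∀ n, Measurable (gn2 n))
    (hcent : ∀ n, (∫ ω, gn1 n (X 0 ω) ∂P) = 0 ∧ (∫ ω, gn2 n (X 0 ω) ∂P) = 0)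
    (hL2 : MemLp (fun ω => g1 (X 0 ω)) 2 P ∧ MemLp (fun ω => g2 (X 0 ω)) 2 P ∧
      (∀ n, MemLp (fun ω => gn1 n (X 0 ω)) 2 P) ∧
      ∀ n, MemLp (fun ω => gn2 n (X 0 ω)) 2 P)
    (hconv : ∀ k : Fin d → ℤ,
      Tendsto (fun n => ∫ ω, gn1 n (X 0 ω) * gn2 n (X k ω) ∂P) atTop
        (nhds (∫ ω, g1 (X 0 ω) * g2 (X k ω) ∂P))) :
    Tendsto (fun n => ((B n).card : ℝ)⁻¹ *
        ∫ ω, (∑ j ∈ B n, gn1 n (X j ω)) * (∑ k ∈ B n, gn2 n (X k ω)) ∂P)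
      atTop
      (nhds (∑ t ∈ Finset.Icc (fun _ => -(m : ℤ)) (fun _ => (m : ℤ)),
        ∫ ω, g1 (X 0 ω) * g2 (X t ω) ∂P)) :=
  covariance_convergence_general P m X hmeas hstat hmdep B hBcard hBreg g1 g2 gn1 gn2 hgmeas hcent
    hL2 hconv
end

section
/- Let f : ℝ^d → ℝ be integrable with compact support and b > 0. Then for all x ∈ ℝ, |∫_{supp f} f(s)/(b − i f(s) x) ds| ≲ (1 + x²)^{−1/2}, i.e. there exists a constant C (depending on f and b) such that the left-hand side is at most C (1+x²)^{−1/2}. -/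
/-!
Writing `g(s) = f(s) / (b − i f(s) x)`, the denominator has real part `b` and imaginary part
`−f(s) x`, so `‖g(s)‖ ≤ |f(s)| / b` and `|x| ‖g(s)‖ ≤ 1`. Integrating over `supp f`, which has
finite measure, gives `(1 + |x|) ‖∫ g‖ ≤ ‖f‖₁ / b + |supp f|`, and `(1 + |x|)⁻¹ ≤ (1 + x²)^{-1/2}`.
-/

open MeasureTheory Complex

section Kernel

variable {b : ℝ}

theorem le_norm_ofReal_sub_I_mul (hb : 0 ≤ b) (y : ℝ) : b ≤ ‖(b : ℂ) - I * y‖ := by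
  simpa [abs_of_nonneg hb] using abs_re_le_norm ((b : ℂ) - I * y)

theorem abs_le_norm_ofReal_sub_I_mul (b y : ℝ) : |y| ≤ ‖(b : ℂ) - I * y‖ := by
  simpa using abs_im_le_norm ((b : ℂ) - I * y)

theorem norm_ofReal_div_sub_I_mul_le (hb : 0 < b) (t x : ℝ) :
    ‖(t : ℂ) / ((b : ℂ) - I * (t * x))‖ ≤ |t| / b := by
  rw [norm_div, norm_real, Real.norm_eq_abs]
  exact div_le_div_of_nonneg_left (abs_nonneg t) hb
    (by simpa using le_norm_ofReal_sub_I_mul hb.le (t * x))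

theorem abs_mul_norm_ofReal_div_sub_I_mul_le_one (hb : 0 < b) (t x : ℝ) :
    |x| * ‖(t : ℂ) / ((b : ℂ) - I * (t * x))‖ ≤ 1 := by
  have hre : b ≤ ‖(b : ℂ) - I * (t * x)‖ := by simpa using le_norm_ofReal_sub_I_mul hb.le (t * x)
  have him : |t * x| ≤ ‖(b : ℂ) - I * (t * x)‖ := by
    simpa using abs_le_norm_ofReal_sub_I_mul b (t * x)
  rw [norm_div, norm_real, Real.norm_eq_abs, mul_div_assoc', div_le_one (hb.trans_le hre),
    mul_comm, ← abs_mul]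
  exact him

end Kernel

theorem norm_integral_mul_one_add_abs_le {α E : Type*} [MeasurableSpace α]
    [NormedAddCommGroup E] [NormedSpace ℝ E] {μ : Measure α} [IsFiniteMeasure μ]
    {g : α → E} {h : α → ℝ} (hh : Integrable h μ) (x : ℝ)
    (hgh : ∀ᵐ a ∂μ, ‖g a‖ ≤ h a) (hgx : ∀ᵐ a ∂μ, |x| * ‖g a‖ ≤ 1) :
    ‖∫ a, g a ∂μ‖ * (1 + |x|) ≤ ∫ a, h a ∂μ + μ.real Set.univ := by
  have hbound : ∀ᵐ a ∂μ, ‖(1 + |x|) • g a‖ ≤ h a + 1 := by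
    filter_upwards [hgh, hgx] with a ha hxa
    rw [norm_smul, Real.norm_of_nonneg (by positivity)]
    linarith
  calc ‖∫ a, g a ∂μ‖ * (1 + |x|) = ‖∫ a, (1 + |x|) • g a ∂μ‖ := by
        rw [integral_smul, norm_smul, Real.norm_of_nonneg (by positivity), mul_comm]
    _ ≤ ∫ a, (h a + 1) ∂μ := norm_integral_le_of_norm_le (hh.add (integrable_const 1)) hbound
    _ = ∫ a, h a ∂μ + μ.real Set.univ := by
        rw [integral_add hh (integrable_const 1), integral_const, smul_eq_mul, mul_one]

theorem inv_one_add_abs_le_one_add_sq_rpow_neg_half (x : ℝ) :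
    (1 + |x|)⁻¹ ≤ (1 + x ^ 2) ^ (-(1 / 2) : ℝ) := by
  rw [Real.rpow_neg (by positivity), ← Real.sqrt_eq_rpow]
  refine inv_anti₀ (Real.sqrt_pos.mpr (by positivity)) ((Real.sqrt_le_left (by positivity)).mpr ?_)
  nlinarith [abs_nonneg x, sq_abs x]

theorem gamma_assumption_four_general {d : ℕ} (f : (Fin d → ℝ) → ℝ) (b : ℝ) (hb : 0 < b)
    (hint : Integrable f) (hcs : HasCompactSupport f) :
    ∃ C : ℝ, ∀ x : ℝ,
      ‖∫ s in Function.support f, ((f s : ℝ) : ℂ) / ((b : ℂ) - Complex.I * (f s * x))‖ ≤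
        C * (1 + x ^ 2) ^ (-(1/2) : ℝ) := by
  have : IsFiniteMeasure (volume.restrict (Function.support f)) :=
    isFiniteMeasure_restrict.mpr
      (measure_mono (subset_tsupport f) |>.trans_lt hcs.measure_lt_top).ne
  set C := (∫ s in Function.support f, |f s| / b) + volume.real (Function.support f)
  have hC : 0 ≤ C := by positivity
  refine ⟨C, fun x => ?_⟩
  have key := norm_integral_mul_one_add_abs_le (μ := volume.restrict (Function.support f))
    (hint.abs.div_const b).restrict x
    (ae_of_all _ fun s => norm_ofReal_div_sub_I_mul_le hb (f s) x)
    (ae_of_all _ fun s => abs_mul_norm_ofReal_div_sub_I_mul_le_one hb (f s) x)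
  rw [measureReal_restrict_apply_univ] at key
  calc _ ≤ C * (1 + |x|)⁻¹ := by rw [← div_eq_mul_inv, le_div_iff₀ (by positivity)]; exact key
    _ ≤ C * (1 + x ^ 2) ^ (-(1/2) : ℝ) :=
      mul_le_mul_of_nonneg_left (inv_one_add_abs_le_one_add_sq_rpow_neg_half x) hC

/-- For an integrable compactly supported `f : ℝ^d → ℝ` and `b > 0`,
`|∫_{supp f} f(s)/(b − i f(s) x) ds| ≲ (1 + x²)^{-1/2}` for all `x ∈ ℝ`. -/
theorem gamma_assumption_four {d : ℕ} (f : (Fin d → ℝ) → ℝ) (b : ℝ) (hb : 0 < b)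
    (hf : Measurable f) (hint : Integrable f) (hcs : HasCompactSupport f) :
    ∃ C : ℝ, ∀ x : ℝ,
      ‖∫ s in Function.support f, ((f s : ℝ) : ℂ) / ((b : ℂ) - Complex.I * (f s * x))‖ ≤
        C * (1 + x ^ 2) ^ (-(1/2) : ℝ) :=
  gamma_assumption_four_general f b hb hint hcs
end

section
/- Let f be a bounded measurable function on ℝ^d with compact support, b > 0, and suppose α := ∫_{supp f} max{1, f(s)²/b} ds < 1/2. Then for every ε ∈ (0, 1/2 − α), ∫_ℝ (1+x²)^{−1+ε} exp( ∫_{supp f} log(1 + x² f(s)²/b) ds ) dx < ∞. -/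
open MeasureTheory

/-! The pointwise estimate `log (1 + y t) ≤ max 1 t · log (1 + y)` for `y, t ≥ 0` (Bernoulli's
inequality when `t ≥ 1`) integrates to `exp (∫_{supp f} log (1 + x² f²/b)) ≤ (1 + x²)^α`, so the
integrand is dominated by `(1 + x²)^(-1 + ε + α)`, which is integrable because
`-1 + ε + α < -1/2`. -/

open Real

theorem integrable_one_add_sq_rpow {p : ℝ} (hp : p < -(1 / 2)) :
    Integrable fun x : ℝ => (1 + x ^ 2) ^ p := by
  have h := integrable_rpow_neg_one_add_norm_sq (E := ℝ) (μ := volume) (r := -2 * p)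
    (by rw [Module.finrank_self]; push_cast; linarith)
  convert h using 3 with x
  · rw [Real.norm_eq_abs, sq_abs]
  · ring

theorem Real.log_one_add_mul_le_max_mul_log {y t : ℝ} (hy : 0 ≤ y) (ht : 0 ≤ t) :
    log (1 + y * t) ≤ max 1 t * log (1 + y) := by
  rcases le_total t 1 with h | h
  · rw [max_eq_left h, one_mul]
    exact log_le_log (by positivity) (by nlinarith)
  · rw [max_eq_right h, ← log_rpow (by positivity)]
    refine log_le_log (by positivity) ?_
    linarith [one_add_mul_self_le_rpow_one_add (by linarith : (-1 : ℝ) ≤ y) h]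

section LogIntegral

variable {X : Type*} [MeasurableSpace X] {μ : Measure X} {g : X → ℝ}

theorem integrable_log_one_add_mul (hg0 : ∀ s, 0 ≤ g s) (hg : Integrable g μ) {y : ℝ}
    (hy : 0 ≤ y) : Integrable (fun s => log (1 + y * g s)) μ := by
  refine (hg.const_mul y).mono' ?_ (Filter.Eventually.of_forall fun s => ?_)
  · exact ((hg.aemeasurable.const_mul y).const_add 1).log.aestronglyMeasurable
  · have hyg : 0 ≤ y * g s := mul_nonneg hy (hg0 s)
    rw [Real.norm_eq_abs, abs_of_nonneg (log_nonneg (by linarith))]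
    linarith [log_le_sub_one_of_pos (by linarith : 0 < 1 + y * g s)]

theorem integral_log_one_add_mul_le [IsFiniteMeasure μ] (hg0 : ∀ s, 0 ≤ g s)
    (hg : Integrable g μ) {y : ℝ} (hy : 0 ≤ y) :
    ∫ s, log (1 + y * g s) ∂μ ≤ (∫ s, max 1 (g s) ∂μ) * log (1 + y) := by
  rw [← integral_mul_const]
  exact integral_mono (integrable_log_one_add_mul hg0 hg hy)
    (((integrable_const 1).sup hg).mul_const _)
    fun s => log_one_add_mul_le_max_mul_log hy (hg0 s)

theorem exp_integral_log_one_add_mul_le_rpow [IsFiniteMeasure μ] (hg0 : ∀ s, 0 ≤ g s)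
    (hg : Integrable g μ) {y : ℝ} (hy : 0 ≤ y) :
    exp (∫ s, log (1 + y * g s) ∂μ) ≤ (1 + y) ^ ∫ s, max 1 (g s) ∂μ := by
  rw [rpow_def_of_pos (by linarith), mul_comm]
  exact exp_le_exp.2 (integral_log_one_add_mul_le hg0 hg hy)

theorem measurable_integral_log_one_add_mul [SFinite μ] (hg : Measurable g) :
    Measurable fun y : ℝ => ∫ s, log (1 + y * g s) ∂μ :=
  (Measurable.stronglyMeasurable (by fun_prop) :
    StronglyMeasurable fun p : ℝ × X => log (1 + p.1 * g p.2)).integral_prod_right'.measurable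

end LogIntegral

theorem gamma_condition_five_general {d : ℕ} (f : (Fin d → ℝ) → ℝ) (b : ℝ) (hb : 0 < b)
    (hf : Measurable f) (hbdd : ∃ C : ℝ, ∀ s, |f s| ≤ C) (hcs : HasCompactSupport f)
    (α : ℝ)
    (hα : α = ∫ s in Function.support f, max 1 (f s ^ 2 / b)) :
    ∀ ε : ℝ, ε ∈ Set.Ioo (0 : ℝ) (1/2 - α) →
      Integrable (fun x : ℝ => (1 + x ^ 2) ^ (-1 + ε) *
        Real.exp (∫ s in Function.support f, Real.log (1 + x ^ 2 * f s ^ 2 / b))) := by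
  rintro ε ⟨-, hεα⟩
  obtain ⟨C, hC⟩ := hbdd
  set μ := volume.restrict (Function.support f)
  have : IsFiniteMeasure μ := isFiniteMeasure_restrict.2
    ((measure_mono (subset_tsupport f)).trans_lt hcs.measure_lt_top).ne
  have hg_meas : Measurable fun s => f s ^ 2 / b := by fun_prop
  have hg : Integrable (fun s => f s ^ 2 / b) μ :=
    Integrable.of_bound hg_meas.aestronglyMeasurable (C ^ 2 / b) (Filter.Eventually.of_forall
      fun s => by
        rw [Real.norm_of_nonneg (by positivity)]
        gcongr ?_ / b
        exact sq_le_sq' (abs_le.1 (hC s)).1 (abs_le.1 (hC s)).2)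
  simp_rw [mul_div_assoc]
  refine (integrable_one_add_sq_rpow (p := -1 + ε + α) (by linarith)).mono' ?_
    (Filter.Eventually.of_forall fun x => ?_)
  · exact ((by fun_prop : Measurable fun x : ℝ => (1 + x ^ 2) ^ (-1 + ε)).mul
      ((measurable_integral_log_one_add_mul hg_meas).comp (measurable_id.pow_const 2)).exp
      ).aestronglyMeasurable
  · have hx : 0 < 1 + x ^ 2 := by positivity
    rw [Real.norm_of_nonneg (by positivity), rpow_add hx (-1 + ε), hα]
    exact mul_le_mul_of_nonneg_left
      (exp_integral_log_one_add_mul_le_rpow (fun s => by positivity) hg (sq_nonneg x))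
      (by positivity)

/-- Verification of condition (5) for the Gamma random measure example: if `f` is a
bounded measurable compactly supported function with
`α = ∫_{supp f} max{1, f(s)²/b} ds < 1/2`, then for every `ε ∈ (0, 1/2 − α)` the function
`x ↦ (1+x²)^{−1+ε} exp(∫_{supp f} log(1 + x² f(s)²/b) ds)` is integrable on `ℝ`. -/
theorem gamma_condition_five {d : ℕ} (f : (Fin d → ℝ) → ℝ) (b : ℝ) (hb : 0 < b)
    (hf : Measurable f) (hbdd : ∃ C : ℝ, ∀ s, |f s| ≤ C) (hcs : HasCompactSupport f)
    (α : ℝ)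
    (hα : α = ∫ s in Function.support f, max 1 (f s ^ 2 / b))
    (hαlt : α < 1/2) :
    ∀ ε : ℝ, ε ∈ Set.Ioo (0 : ℝ) (1/2 - α) →
      Integrable (fun x : ℝ => (1 + x ^ 2) ^ (-1 + ε) *
        Real.exp (∫ s in Function.support f, Real.log (1 + x ^ 2 * f s ^ 2 / b))) :=
  gamma_condition_five_general f b hb hf hbdd hcs α hα
end
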